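/- Suppose the data (U,Y) are informative for interpolation at σ (so the uniqueness rank condition rank [H_n(U), 0; H_n(Y), γ_n(σ)] = rank [H_n(U); H_n(Y)] + 1 holds) and M_0,…,M_{k−1} are the moments of orders 0,…,k−1. Then there exists a unique M_k ∈ ℂ with Σ_{U,Y} ⊆ Σ^k_{σ,M_k} if and only if rank [H_n(U), 0, γ_n^{(k)}(σ); H_n(Y), γ_n(σ), Σ_{j=0}^{k−1} C(k,j) M_j γ_n^{(k−j)}(σ)] = rank [H_n(U), 0; H_n(Y), γ_n(σ)]. -/

import Mathlib

open Matrix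

/-- Hankel matrix of depth `n` built from data `W = (w_0, …, w_T)`. -/
def hankel (n T : ℕ) (h : n ≤ T) (W : Fin (T + 1) → ℝ) :
    Matrix (Fin (n + 1)) (Fin (T - n + 1)) ℝ :=
  Matrix.of fun i j => W ⟨i.1 + j.1, by omega⟩

/-- The order-`n` system with parameters `[q  -p]` explains the data `(U, Y)`. -/
def Explains (n T : ℕ) (h : n ≤ T) (U Y : Fin (T + 1) → ℝ)
    (q : Fin (n + 1) → ℝ) (p : Fin n → ℝ) : Prop :=
  ∀ j : Fin (T - n + 1),
    ∑ i : Fin (n + 1), q i * U ⟨i.1 + j.1, by omega⟩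
      - ∑ i : Fin n, p i * Y ⟨i.1 + j.1, by omega⟩ = Y ⟨n + j.1, by omega⟩

/-!
Everything is read off the left kernel of the stacked Hankel matrix `H = [H_n(U); H_n(Y)]`.
The systems explaining the data are exactly the real vectors `w` with `w H = 0` normalised by
`w_last = -1`, and for them the `k`-th moment condition reads `w ⬝ (d + M_k c) = 0`, where `c` and
`d` are the last columns of the two block matrices. The normalised vectors span the real left
kernel, whose complexification is the complex left kernel, so the condition says that `d + M_k c`
annihilates the complex left kernel. The uniqueness rank condition provides a kernel vector `u`
with `u ⬝ c ≠ 0`; hence such an `M_k` exists, and is then unique, iff every kernel vector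
annihilating `c` annihilates `d`, which by rank–nullity is the rank equality.
-/

section LinearAlgebra

variable {K : Type*} [Field K]

theorem Matrix.rank_add_finrank_ker_vecMulLinear {ι κ : Type*} [Fintype ι] [Fintype κ]
    (A : Matrix ι κ K) :
    A.rank + Module.finrank K (LinearMap.ker A.vecMulLinear) = Fintype.card ι := by
  rw [← rank_transpose, rank, mulVecLin_transpose, LinearMap.finrank_range_add_finrank_ker,
    Module.finrank_fintype_fun_eq_card]

theorem Matrix.rank_eq_rank_iff_of_vecMul_eq_zero {ι κ₁ κ₂ : Type*} [Fintype ι] [Fintype κ₁]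
    [Fintype κ₂] (A : Matrix ι κ₁ K) (B : Matrix ι κ₂ K)
    (h : ∀ u, u ᵥ* B = 0 → u ᵥ* A = 0) :
    B.rank = A.rank ↔ ∀ u, u ᵥ* A = 0 → u ᵥ* B = 0 := by
  have hle : LinearMap.ker B.vecMulLinear ≤ LinearMap.ker A.vecMulLinear := h
  have hA := A.rank_add_finrank_ker_vecMulLinear
  have hB := B.rank_add_finrank_ker_vecMulLinear
  constructor
  · intro hrank
    exact (Submodule.eq_of_le_of_finrank_eq hle (by omega)).ge
  · intro hge
    rw [le_antisymm hle hge] at hB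
    omega

theorem Matrix.exists_vecMul_eq_zero_of_rank_ne {ι κ₁ κ₂ : Type*} [Fintype ι] [Fintype κ₁]
    [Fintype κ₂] {A : Matrix ι κ₁ K} {B : Matrix ι κ₂ K} (h : ∀ u, u ᵥ* B = 0 → u ᵥ* A = 0)
    (hrank : B.rank ≠ A.rank) : ∃ u, u ᵥ* A = 0 ∧ u ᵥ* B ≠ 0 := by
  simpa using mt (rank_eq_rank_iff_of_vecMul_eq_zero A B h).2 hrank

theorem Matrix.vecMul_fromBlocks_eq_zero_iff {R m₁ m₂ κ₁ κ₂ : Type*} [Semiring R]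
    [Fintype m₁] [Fintype m₂] (A : Matrix m₁ κ₁ R) (B : Matrix m₁ κ₂ R) (C : Matrix m₂ κ₁ R)
    (D : Matrix m₂ κ₂ R) (u : m₁ ⊕ m₂ → R) :
    u ᵥ* fromBlocks A B C D = 0 ↔
      u ᵥ* fromRows A C = 0 ∧ ∀ j, u ⬝ᵥ Sum.elim (fun i => B i j) (fun i => D i j) = 0 := by
  rw [← fromCols_fromRows_eq_fromBlocks, vecMul_fromCols, ← Sum.elim_zero_zero, Sum.elim_eq_iff,
    funext_iff (f := u ᵥ* fromRows B D)]
  refine and_congr_right fun _ => forall_congr' fun j => ?_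
  simp only [Pi.zero_apply, vecMul, dotProduct, Fintype.sum_sum_type, fromRows_apply_inl,
    fromRows_apply_inr, Sum.elim_inl, Sum.elim_inr]

theorem LinearMap.eq_zero_of_eq_zero_on_level {E F : Type*} [AddCommGroup E] [Module K E]
    [AddCommGroup F] [Module K F] {S : Submodule K E} {φ : E →ₗ[K] K} {c : K} (hc : c ≠ 0)
    (hS : ∃ x₀ ∈ S, φ x₀ = c) {L : E →ₗ[K] F} (hL : ∀ x ∈ S, φ x = c → L x = 0) :
    ∀ x ∈ S, L x = 0 := by
  obtain ⟨x₀, hx₀, hφx₀⟩ := hS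
  intro x hx
  by_cases hφx : φ x = 0
  · have := hL (x + x₀) (S.add_mem hx hx₀) (by simp [hφx, hφx₀])
    rwa [map_add, hL x₀ hx₀ hφx₀, add_zero] at this
  · have := hL ((c / φ x) • x) (S.smul_mem _ hx) (by simp [hφx])
    rwa [map_smul, smul_eq_zero, or_iff_right (div_ne_zero hc hφx)] at this

theorem existsUnique_dotProduct_add_smul_eq_zero_iff {ι : Type*} [Fintype ι]
    {S : Submodule K (ι → K)} {c d : ι → K} (hc : ∃ u₀ ∈ S, u₀ ⬝ᵥ c ≠ 0) :
    (∃! a : K, ∀ u ∈ S, u ⬝ᵥ (d + a • c) = 0) ↔ ∀ u ∈ S, u ⬝ᵥ c = 0 → u ⬝ᵥ d = 0 := by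
  obtain ⟨u₀, hu₀, hcu₀⟩ := hc
  constructor
  · rintro ⟨a, ha, -⟩ u hu hcu
    simpa [dotProduct_add, hcu] using ha u hu
  · intro h
    refine ⟨-(u₀ ⬝ᵥ d / u₀ ⬝ᵥ c), fun u hu => ?_, fun a ha => ?_⟩
    · have := h (u - (u ⬝ᵥ c / u₀ ⬝ᵥ c) • u₀) (S.sub_mem hu (S.smul_mem _ hu₀))
        (by simp [sub_dotProduct, hcu₀])
      simp only [sub_dotProduct, smul_dotProduct, smul_eq_mul, sub_eq_zero] at this
      simp only [dotProduct_add, dotProduct_smul, smul_eq_mul, this]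
      field_simp
      ring
    · have := ha u₀ hu₀
      simp only [dotProduct_add, dotProduct_smul, smul_eq_mul] at this
      field_simp
      linear_combination this

end LinearAlgebra

section Complexification

variable {ι κ : Type*} [Fintype ι]

open Complex

theorem Matrix.vecMul_map_ofReal_eq_zero_iff (B : Matrix ι κ ℝ) (u : ι → ℂ) :
    u ᵥ* B.map ofReal = 0 ↔ (re ∘ u) ᵥ* B = 0 ∧ (im ∘ u) ᵥ* B = 0 := by
  simp only [funext_iff, Complex.ext_iff, ← forall_and]
  refine forall_congr' fun j => ?_
  simp [vecMul, dotProduct, re_sum, im_sum]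

theorem Matrix.ofReal_comp_vecMul_eq_zero {B : Matrix ι κ ℝ} {w : ι → ℝ} (hw : w ᵥ* B = 0) :
    (ofReal ∘ w) ᵥ* B.map ofReal = 0 := by
  funext j
  have := congrFun hw j
  simp only [vecMul, dotProduct, Pi.zero_apply, map_apply, Function.comp_apply] at this ⊢
  exact_mod_cast this

theorem Matrix.forall_ofReal_dotProduct_eq_zero_iff (B : Matrix ι κ ℝ) (x : ι → ℂ) :
    (∀ w : ι → ℝ, w ᵥ* B = 0 → (ofReal ∘ w) ⬝ᵥ x = 0) ↔
      ∀ u : ι → ℂ, u ᵥ* B.map ofReal = 0 → u ⬝ᵥ x = 0 := by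
  refine ⟨fun h u hu => ?_, fun h w hw => h _ (ofReal_comp_vecMul_eq_zero hw)⟩
  obtain ⟨hre, him⟩ := (vecMul_map_ofReal_eq_zero_iff B u).1 hu
  have hu : u = ofReal ∘ (re ∘ u) + I • (ofReal ∘ (im ∘ u)) := by
    funext i
    simp [mul_comm I, re_add_im]
  rw [hu, add_dotProduct, smul_dotProduct, h _ hre, h _ him, smul_zero, add_zero]

theorem Matrix.existsUnique_ofReal_dotProduct_add_smul_eq_zero_iff (B : Matrix ι κ ℝ)
    (c d : ι → ℂ) (i₀ : ι) (h₁ : ∃ w, w ᵥ* B = 0 ∧ w i₀ = -1)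
    (h₂ : ∃ u, u ᵥ* B.map ofReal = 0 ∧ u ⬝ᵥ c ≠ 0) :
    (∃! a : ℂ, ∀ w, w ᵥ* B = 0 → w i₀ = -1 → (ofReal ∘ w) ⬝ᵥ (d + a • c) = 0) ↔
      ∀ u, u ᵥ* B.map ofReal = 0 → u ⬝ᵥ c = 0 → u ⬝ᵥ d = 0 := by
  have hL : ∀ (x : ι → ℂ) (w : ι → ℝ),
      Fintype.linearCombination ℝ x w = (ofReal ∘ w) ⬝ᵥ x := by
    simp [Fintype.linearCombination_apply, dotProduct, real_smul]
  calc _ ↔ ∃! a : ℂ, ∀ w, w ᵥ* B = 0 → (ofReal ∘ w) ⬝ᵥ (d + a • c) = 0 := by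
        refine existsUnique_congr fun a => ⟨fun h w hw => ?_, fun h w hw _ => h w hw⟩
        rw [← hL]
        refine LinearMap.eq_zero_of_eq_zero_on_level (S := LinearMap.ker B.vecMulLinear)
          (φ := LinearMap.proj i₀) (c := -1) (by norm_num) (by simpa using h₁)
          (fun w hw hw₀ => ?_) w hw
        rw [hL]
        exact h w hw hw₀
    _ ↔ ∃! a : ℂ, ∀ u ∈ LinearMap.ker (B.map ofReal).vecMulLinear, u ⬝ᵥ (d + a • c) = 0 :=
        existsUnique_congr fun a => forall_ofReal_dotProduct_eq_zero_iff B _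
    _ ↔ _ := existsUnique_dotProduct_add_smul_eq_zero_iff (by simpa using h₂)

end Complexification

section Polynomial

theorem iteratedDeriv_sum_mul_pow {𝕜 ι : Type*} [NontriviallyNormedField 𝕜] (s : Finset ι)
    (a : ι → 𝕜) (e : ι → ℕ) (m : ℕ) (x : 𝕜) :
    iteratedDeriv m (fun z => ∑ i ∈ s, a i * z ^ e i) x =
      ∑ i ∈ s, a i * iteratedDeriv m (fun z => z ^ e i) x := by
  rw [iteratedDeriv_fun_sum fun i _ => by fun_prop]
  simp only [iteratedDeriv_const_mul_field]

theorem pow_add_sum_eq_sum_snoc {n : ℕ} (p : Fin n → ℝ) (z : ℂ) :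
    z ^ n + ∑ l : Fin n, (p l : ℂ) * z ^ (l : ℕ) =
      ∑ i : Fin (n + 1), (((Fin.snoc p 1 : Fin (n + 1) → ℝ) i : ℝ) : ℂ) * z ^ (i : ℕ) := by
  simp [Fin.sum_univ_castSucc, add_comm]

end Polynomial

noncomputable section Interpolation

variable {n : ℕ}

open Complex

def systemVector (q : Fin (n + 1) → ℝ) (p : Fin n → ℝ) : Fin (n + 1) ⊕ Fin (n + 1) → ℝ :=
  Sum.elim q (-Fin.snoc p 1)

/-- The column `[0; γ_n(σ)]`. -/
def interpolationColumn (n : ℕ) (σ : ℂ) : Fin (n + 1) ⊕ Fin (n + 1) → ℂ :=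
  Sum.elim (fun _ => 0) fun i => σ ^ (i : ℕ)

/-- The column `[γ_n^{(k)}(σ); ∑_{j<k} C(k,j) M_j γ_n^{(k-j)}(σ)]`. -/
def momentColumn (n k : ℕ) (M : ℕ → ℂ) (σ : ℂ) : Fin (n + 1) ⊕ Fin (n + 1) → ℂ :=
  Sum.elim (fun i => iteratedDeriv k (fun z : ℂ => z ^ (i : ℕ)) σ) fun i =>
    ∑ l ∈ Finset.range k,
      (k.choose l : ℂ) * M l * iteratedDeriv (k - l) (fun z : ℂ => z ^ (i : ℕ)) σ

theorem explains_iff_systemVector_vecMul {T : ℕ} (hT : n ≤ T) (U Y : Fin (T + 1) → ℝ)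
    (q : Fin (n + 1) → ℝ) (p : Fin n → ℝ) :
    Explains n T hT U Y q p ↔
      systemVector q p ᵥ* fromRows (hankel n T hT U) (hankel n T hT Y) = 0 := by
  rw [Explains, systemVector, sumElim_vecMul_fromRows, funext_iff]
  refine forall_congr' fun j => ?_
  simp only [Pi.add_apply, Pi.zero_apply, vecMul, dotProduct, hankel, of_apply, Pi.neg_apply,
    neg_mul, Finset.sum_neg_distrib, Fin.sum_univ_castSucc (n := n), Fin.snoc_castSucc,
    Fin.snoc_last, Fin.val_castSucc, Fin.val_last, one_mul]
  constructor <;> intro h <;> linarith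

theorem exists_systemVector_eq {w : Fin (n + 1) ⊕ Fin (n + 1) → ℝ}
    (hw : w (.inr (Fin.last n)) = -1) : ∃ q p, systemVector q p = w := by
  refine ⟨w ∘ .inl, fun l => -w (.inr l.castSucc), funext fun i => ?_⟩
  rcases i with i | i
  · rfl
  · cases i using Fin.lastCases <;> simp [systemVector, hw]

theorem ofReal_comp_systemVector_dotProduct (q : Fin (n + 1) → ℝ) (p : Fin n → ℝ) (k : ℕ)
    (M : ℕ → ℂ) (σ a : ℂ) :
    (ofReal ∘ systemVector q p) ⬝ᵥ (momentColumn n k M σ + a • interpolationColumn n σ) =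
      iteratedDeriv k (fun z : ℂ => ∑ i : Fin (n + 1), (q i : ℂ) * z ^ (i : ℕ)) σ -
        ((∑ j ∈ Finset.range k, (k.choose j : ℂ) * M j * iteratedDeriv (k - j)
            (fun z : ℂ => z ^ n + ∑ l : Fin n, (p l : ℂ) * z ^ (l : ℕ)) σ) +
          a * (σ ^ n + ∑ l : Fin n, (p l : ℂ) * σ ^ (l : ℕ))) := by
  simp only [pow_add_sum_eq_sum_snoc, iteratedDeriv_sum_mul_pow]
  simp only [systemVector, momentColumn, interpolationColumn, dotProduct, Fintype.sum_sum_type,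
    Function.comp_apply, Pi.add_apply, Pi.smul_apply, Pi.neg_apply, Sum.elim_inl, Sum.elim_inr,
    smul_eq_mul, mul_zero, Finset.sum_const_zero, zero_add, ofReal_neg, neg_mul, mul_add,
    Finset.sum_add_distrib, Finset.sum_neg_distrib, Finset.mul_sum]
  rw [Finset.sum_comm]
  simp only [mul_assoc, mul_comm]
  ring

theorem forall_explains_moment_iff {T : ℕ} (hT : n ≤ T) (U Y : Fin (T + 1) → ℝ) (k : ℕ)
    (M : ℕ → ℂ) (σ a : ℂ) :
    (∀ (q : Fin (n + 1) → ℝ) (p : Fin n → ℝ), Explains n T hT U Y q p →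
        iteratedDeriv k (fun z : ℂ => ∑ i : Fin (n + 1), (q i : ℂ) * z ^ (i : ℕ)) σ
          = (∑ j ∈ Finset.range k, (k.choose j : ℂ) * M j *
              iteratedDeriv (k - j) (fun z : ℂ => z ^ n + ∑ l : Fin n, (p l : ℂ) * z ^ (l : ℕ)) σ)
            + a * (σ ^ n + ∑ l : Fin n, (p l : ℂ) * σ ^ (l : ℕ))) ↔
      ∀ w, w ᵥ* fromRows (hankel n T hT U) (hankel n T hT Y) = 0 → w (.inr (Fin.last n)) = -1 →
        (ofReal ∘ w) ⬝ᵥ (momentColumn n k M σ + a • interpolationColumn n σ) = 0 := by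
  constructor
  · intro h w hw hw₀
    obtain ⟨q, p, rfl⟩ := exists_systemVector_eq hw₀
    rw [ofReal_comp_systemVector_dotProduct, sub_eq_zero]
    exact h q p ((explains_iff_systemVector_vecMul hT U Y q p).2 hw)
  · intro h q p hqp
    have := h _ ((explains_iff_systemVector_vecMul hT U Y q p).1 hqp) (by simp [systemVector])
    rwa [ofReal_comp_systemVector_dotProduct, sub_eq_zero] at this

end Interpolation

theorem stmt_11_general (n T : ℕ) (hT : n ≤ T) (U Y : Fin (T + 1) → ℝ) (σ : ℂ)
    (k : ℕ) (M : ℕ → ℂ)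
    (hne : ∃ (q : Fin (n + 1) → ℝ) (p : Fin n → ℝ), Explains n T hT U Y q p)
    (huniqrank : (Matrix.fromBlocks
        ((hankel n T hT U).map (Complex.ofReal : ℝ → ℂ))
        (0 : Matrix (Fin (n + 1)) (Fin 1) ℂ)
        ((hankel n T hT Y).map (Complex.ofReal : ℝ → ℂ))
        (Matrix.of fun (i : Fin (n + 1)) (_ : Fin 1) => σ ^ (i : ℕ))).rank
      = (Matrix.fromRows
        ((hankel n T hT U).map (Complex.ofReal : ℝ → ℂ))
        ((hankel n T hT Y).map (Complex.ofReal : ℝ → ℂ))).rank + 1) :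
    (∃! Mk : ℂ, ∀ (q : Fin (n + 1) → ℝ) (p : Fin n → ℝ), Explains n T hT U Y q p →
        iteratedDeriv k (fun z : ℂ => ∑ i : Fin (n + 1), (q i : ℂ) * z ^ (i : ℕ)) σ
          = (∑ j ∈ Finset.range k, (k.choose j : ℂ) * M j *
              iteratedDeriv (k - j)
                (fun z : ℂ => z ^ n + ∑ l : Fin n, (p l : ℂ) * z ^ (l : ℕ)) σ)
            + Mk * (σ ^ n + ∑ l : Fin n, (p l : ℂ) * σ ^ (l : ℕ))) ↔
      (Matrix.fromBlocks
          ((hankel n T hT U).map (Complex.ofReal : ℝ → ℂ))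
          (Matrix.of fun (i : Fin (n + 1)) (j : Fin 2) =>
            if j = 0 then 0 else iteratedDeriv k (fun z : ℂ => z ^ (i : ℕ)) σ)
          ((hankel n T hT Y).map (Complex.ofReal : ℝ → ℂ))
          (Matrix.of fun (i : Fin (n + 1)) (j : Fin 2) =>
            if j = 0 then σ ^ (i : ℕ)
            else ∑ l ∈ Finset.range k, (k.choose l : ℂ) * M l *
              iteratedDeriv (k - l) (fun z : ℂ => z ^ (i : ℕ)) σ)).rank
        = (Matrix.fromBlocks
          ((hankel n T hT U).map (Complex.ofReal : ℝ → ℂ))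
          (0 : Matrix (Fin (n + 1)) (Fin 1) ℂ)
          ((hankel n T hT Y).map (Complex.ofReal : ℝ → ℂ))
          (Matrix.of fun (i : Fin (n + 1)) (_ : Fin 1) => σ ^ (i : ℕ))).rank := by
  set B := fromRows (hankel n T hT U) (hankel n T hT Y)
  have h₁ : ∃ w, w ᵥ* B = 0 ∧ w (.inr (Fin.last n)) = -1 := by
    obtain ⟨q, p, h⟩ := hne
    exact ⟨systemVector q p, (explains_iff_systemVector_vecMul hT U Y q p).1 h,
      by simp [systemVector]⟩
  have h₂ : ∃ u, u ᵥ* B.map Complex.ofReal = 0 ∧ u ⬝ᵥ interpolationColumn n σ ≠ 0 := by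
    rw [← fromRows_map] at huniqrank
    obtain ⟨u, hu, hu'⟩ := exists_vecMul_eq_zero_of_rank_ne
      (fun u hu => by rw [vecMul_fromBlocks_eq_zero_iff, ← fromRows_map] at hu; exact hu.1)
      (huniqrank.trans_ne (Nat.succ_ne_self _))
    rw [ne_eq, vecMul_fromBlocks_eq_zero_iff, ← fromRows_map, Fin.forall_fin_one] at hu'
    exact ⟨u, hu, fun h => hu' ⟨hu, h⟩⟩
  rw [rank_eq_rank_iff_of_vecMul_eq_zero _ _ fun u hu => ?_,
    existsUnique_congr fun a => forall_explains_moment_iff hT U Y k M σ a,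
    existsUnique_ofReal_dotProduct_add_smul_eq_zero_iff B _ _ _ h₁ h₂]
  all_goals
    simp only [vecMul_fromBlocks_eq_zero_iff, ← fromRows_map, Fin.forall_fin_one,
      Fin.forall_fin_two, of_apply, Matrix.zero_apply, Fin.isValue, if_true, one_ne_zero,
      if_false] at *
  · exact forall_congr' fun u => by unfold interpolationColumn momentColumn; tauto
  · exact ⟨hu.1, hu.2.1⟩

theorem stmt_11 (n T : ℕ) (hT : n ≤ T) (U Y : Fin (T + 1) → ℝ) (σ : ℂ)
    (k : ℕ) (hk : 0 < k) (M : ℕ → ℂ)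
    (hne : ∃ (q : Fin (n + 1) → ℝ) (p : Fin n → ℝ), Explains n T hT U Y q p)
    (huniqrank : (Matrix.fromBlocks
        ((hankel n T hT U).map (Complex.ofReal : ℝ → ℂ))
        (0 : Matrix (Fin (n + 1)) (Fin 1) ℂ)
        ((hankel n T hT Y).map (Complex.ofReal : ℝ → ℂ))
        (Matrix.of fun (i : Fin (n + 1)) (_ : Fin 1) => σ ^ (i : ℕ))).rank
      = (Matrix.fromRows
        ((hankel n T hT U).map (Complex.ofReal : ℝ → ℂ))
        ((hankel n T hT Y).map (Complex.ofReal : ℝ → ℂ))).rank + 1)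
    (hlow : ∀ j < k, ∀ (q : Fin (n + 1) → ℝ) (p : Fin n → ℝ), Explains n T hT U Y q p →
      iteratedDeriv j (fun z : ℂ => ∑ i : Fin (n + 1), (q i : ℂ) * z ^ (i : ℕ)) σ
        = ∑ i ∈ Finset.range (j + 1), (j.choose i : ℂ) * M i *
            iteratedDeriv (j - i)
              (fun z : ℂ => z ^ n + ∑ l : Fin n, (p l : ℂ) * z ^ (l : ℕ)) σ) :
    (∃! Mk : ℂ, ∀ (q : Fin (n + 1) → ℝ) (p : Fin n → ℝ), Explains n T hT U Y q p →
        iteratedDeriv k (fun z : ℂ => ∑ i : Fin (n + 1), (q i : ℂ) * z ^ (i : ℕ)) σ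
          = (∑ j ∈ Finset.range k, (k.choose j : ℂ) * M j *
              iteratedDeriv (k - j)
                (fun z : ℂ => z ^ n + ∑ l : Fin n, (p l : ℂ) * z ^ (l : ℕ)) σ)
            + Mk * (σ ^ n + ∑ l : Fin n, (p l : ℂ) * σ ^ (l : ℕ))) ↔
      (Matrix.fromBlocks
          ((hankel n T hT U).map (Complex.ofReal : ℝ → ℂ))
          (Matrix.of fun (i : Fin (n + 1)) (j : Fin 2) =>
            if j = 0 then 0 else iteratedDeriv k (fun z : ℂ => z ^ (i : ℕ)) σ)
          ((hankel n T hT Y).map (Complex.ofReal : ℝ → ℂ))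
          (Matrix.of fun (i : Fin (n + 1)) (j : Fin 2) =>
            if j = 0 then σ ^ (i : ℕ)
            else ∑ l ∈ Finset.range k, (k.choose l : ℂ) * M l *
              iteratedDeriv (k - l) (fun z : ℂ => z ^ (i : ℕ)) σ)).rank
        = (Matrix.fromBlocks
          ((hankel n T hT U).map (Complex.ofReal : ℝ → ℂ))
          (0 : Matrix (Fin (n + 1)) (Fin 1) ℂ)
          ((hankel n T hT Y).map (Complex.ofReal : ℝ → ℂ))
          (Matrix.of fun (i : Fin (n + 1)) (_ : Fin 1) => σ ^ (i : ℕ))).rank :=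
  stmt_11_general n T hT U Y σ k M hne huniqrank
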